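/- arXiv:2002.04257 — 8 statements merged into one kernel-verified Lean document; each statement's English description precedes it below -/
import Mathlib

section
/- (Birkhoff's representation theorem) Every complete lattice L is order-isomorphic to the concept lattice of the polarity (L, L, ≤), where ≤ is the lattice order of L. -/
/-- Birkhoff's representation theorem: every complete lattice `L` is order-isomorphic to
the concept lattice of the polarity `(L, L, ≤)`. -/
theorem completeLattice_orderIso_conceptLattice (L : Type*) [CompleteLattice L] :
    Nonempty (L ≃o Concept L L (· ≤ ·)) :=
  ⟨DedekindCut.principalIso⟩
end

section
/- Let (Z, E) be a reflexive graph whose relation E is also transitive (i.e., E is a preorder). Then the concept lattice of the associated polarity (Z, Z, I_{Eᶜ}) satisfies the completely distributive law. -/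
universe u v

/-!
Transitivity makes every extent of the polarity `(Z, Z, I_{Eᶜ})` closed upwards along `E`, and
reflexivity then makes the intent of a concept exactly the complement of its extent. Hence the
supremum of concepts, whose intent is the intersection of the intents, has the union of the extents
as its extent. So `Concept.extent` is an injective map into `Set Z` that carries `⨆` to `⋃` and
`⨅` to `⋂`, and complete distributivity is inherited from `Set Z`.
-/

namespace Concept

variable {Z : Type*} {E : Z → Z → Prop}

theorem mem_extent_of_mem_extent_of_rel [IsTrans Z E] (c : Concept Z Z fun a x => ¬ E a x)
    {a b : Z} (ha : a ∈ c.extent) (hab : E a b) : b ∈ c.extent := by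
  rw [← c.lowerPolar_intent] at ha ⊢
  exact fun x hx hbx => ha hx (_root_.trans hab hbx)

theorem compl_extent_eq_intent [Std.Refl E] [IsTrans Z E] (c : Concept Z Z fun a x => ¬ E a x) :
    c.extentᶜ = c.intent := by
  ext a
  refine ⟨fun ha => ?_, fun ha ha' => rel_extent_intent ha' ha (refl a)⟩
  rw [← c.upperPolar_extent]
  exact fun b hb hba => ha (c.mem_extent_of_mem_extent_of_rel hb hba)

theorem extent_iSup_eq_iUnion [Std.Refl E] [IsTrans Z E] {ι : Sort*}
    (f : ι → Concept Z Z fun a x => ¬ E a x) : (⨆ i, f i).extent = ⋃ i, (f i).extent := by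
  rw [← compl_inj_iff, compl_extent_eq_intent, intent_iSup, Set.compl_iUnion]
  simp only [compl_extent_eq_intent]

end Concept

/-- For a reflexive and transitive graph `(Z, E)`, the concept lattice of the associated
polarity `(Z, Z, I_{Eᶜ})` satisfies the completely distributive law. -/
theorem conceptLattice_completelyDistrib_of_transitive {Z : Type*} (E : Z → Z → Prop)
    (hrefl : Reflexive E) (htrans : Transitive E)
    (ι : Type u) (κ : ι → Type v)
    (f : (i : ι) → κ i → Concept Z Z (fun a x => ¬ E a x)) :
    ⨅ i, ⨆ j, f i j = ⨆ g : (i : ι) → κ i, ⨅ i, f i (g i) := by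
  have : Std.Refl E := ⟨hrefl⟩
  have : IsTrans Z E := ⟨fun _ _ _ hab hbc => htrans hab hbc⟩
  apply Concept.ext
  simp only [Concept.extent_iInf, Concept.extent_iSup_eq_iUnion]
  exact iInf_iSup_eq
end

section
/- Let (Z, E) be a reflexive graph whose relation E is antisymmetric (z E z' and z' E z imply z = z'), and suppose the concept lattice of the associated polarity (Z, Z, I_{Eᶜ}) satisfies the completely distributive law. Then E is transitive. -/
/-!
Write `γ t` and `μ t` for the concepts generated by the object `t` and by the attribute `t`.
If `a E b`, `b E c` but not `a E c`, then reflexivity and antisymmetry give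
`γ b ≤ γ a ⊔ μ b` and `γ b ⊓ γ a ≤ μ b`. Binary distributivity, the simplest instance of the
completely distributive law, then yields `γ b ≤ γ b ⊓ (γ a ⊔ μ b) ≤ μ b`, that is `¬ b E b`.
-/

universe u v

open Concept

theorem inf_sup_le_of_iInf_iSup_eq {L : Type*} [CompleteLattice L]
    (h : ∀ (ι : Type u) (κ : ι → Type v) (f : (i : ι) → κ i → L),
      ⨅ i, ⨆ j, f i j = ⨆ g : (i : ι) → κ i, ⨅ i, f i (g i))
    (x y z : L) : x ⊓ (y ⊔ z) ≤ x ⊓ y ⊔ x ⊓ z := by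
  let f : ULift.{u} Bool → ULift.{v} Bool → L := fun i j =>
    bif i.down then (bif j.down then y else z) else x
  calc x ⊓ (y ⊔ z) ≤ ⨅ i, ⨆ j, f i j := by
        refine le_iInf fun ⟨i⟩ => ?_
        cases i <;> simp [f, iSup_ulift, iSup_bool_eq]
    _ = ⨆ g : ULift.{u} Bool → ULift.{v} Bool, ⨅ i, f i (g i) := h _ _ f
    _ ≤ x ⊓ y ⊔ x ⊓ z := iSup_le fun g => by
        have hg : ⨅ i, f i (g i) ≤ x ⊓ f ⟨true⟩ (g ⟨true⟩) :=
          le_inf (iInf_le_of_le ⟨false⟩ le_rfl) (iInf_le _ _)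
        cases hj : (g ⟨true⟩).down <;> simp only [f, hj, cond_true, cond_false] at hg
        · exact hg.trans le_sup_right
        · exact hg.trans le_sup_left

section GraphPolarity

variable {Z : Type*} {E : Z → Z → Prop}

theorem mem_extent_ofObject_iff {t u : Z} :
    u ∈ (ofObject (fun x y => ¬ E x y) t).extent ↔ ∀ w, E u w → E t w := by
  simp only [extent_ofObjects, mem_lowerPolar_iff, mem_upperPolar_singleton, not_imp_not]

theorem mem_intent_ofAttribute_iff {t w : Z} :
    w ∈ (ofAttribute (fun x y => ¬ E x y) t).intent ↔ ∀ u, E u w → E u t := by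
  simp only [intent_ofAttributes, mem_upperPolar_iff, mem_lowerPolar_singleton, not_imp_not]

theorem ofObject_le_ofObject_sup_ofAttribute (hrefl : ∀ z, E z z)
    (hanti : ∀ z z' : Z, E z z' → E z' z → z = z') {a b : Z} (hab : E a b) :
    ofObject (fun x y => ¬ E x y) b ≤
      ofObject (fun x y => ¬ E x y) a ⊔ ofAttribute (fun x y => ¬ E x y) b := by
  rw [← intent_subset_intent_iff]
  rintro w ⟨hnaw, hw⟩
  rw [intent_ofObjects, mem_upperPolar_singleton] at hnaw ⊢
  rw [mem_intent_ofAttribute_iff] at hw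
  intro hbw
  exact hnaw (hanti w b (hw w (hrefl w)) hbw ▸ hab)

theorem ofObject_inf_ofObject_le_ofAttribute (hrefl : ∀ z, E z z)
    (hanti : ∀ z z' : Z, E z z' → E z' z → z = z') {a b c : Z} (hbc : E b c) (hac : ¬ E a c) :
    ofObject (fun x y => ¬ E x y) b ⊓ ofObject (fun x y => ¬ E x y) a ≤
      ofAttribute (fun x y => ¬ E x y) b := by
  rw [← extent_subset_extent_iff]
  rintro u ⟨hub, hua⟩
  rw [mem_extent_ofObject_iff] at hub hua
  rw [extent_ofAttributes, mem_lowerPolar_singleton]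
  intro hEub
  obtain rfl := hanti u b hEub (hub u (hrefl u))
  exact hac (hua c hbc)

end GraphPolarity

/-- If `(Z, E)` is a reflexive, antisymmetric graph whose associated concept lattice
satisfies the completely distributive law, then `E` is transitive. -/
theorem transitive_of_conceptLattice_completelyDistrib {Z : Type*} (E : Z → Z → Prop)
    (hrefl : Reflexive E)
    (hanti : ∀ z z' : Z, E z z' → E z' z → z = z')
    (hdist : ∀ (ι : Type u) (κ : ι → Type v)
      (f : (i : ι) → κ i → Concept Z Z (fun a x => ¬ E a x)),
      ⨅ i, ⨆ j, f i j = ⨆ g : (i : ι) → κ i, ⨅ i, f i (g i)) :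
    Transitive E := by
  intro a b c hab hbc
  by_contra hac
  set γ := ofObject (fun a x => ¬ E a x)
  set μ := ofAttribute (fun a x => ¬ E a x)
  have hbb : γ b ≤ μ b := calc
    γ b ≤ γ b ⊓ (γ a ⊔ μ b) := le_inf le_rfl (ofObject_le_ofObject_sup_ofAttribute hrefl hanti hab)
    _ ≤ γ b ⊓ γ a ⊔ γ b ⊓ μ b := inf_sup_le_of_iInf_iSup_eq hdist _ _ _
    _ ≤ μ b := sup_le (ofObject_inf_ofObject_le_ofAttribute hrefl hanti hbc hac) inf_le_right
  exact ofObject_le_ofAttribute_iff.1 hbb (hrefl b)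
end

section
/- Let (A, X, I) be a polarity and R ⊆ A × X an I-compatible relation. Then for every formal concept c of (A, X, I), the pair (R^{(0)}[intent(c)], (R^{(0)}[intent(c)])^↑) is a formal concept, and the operation [R] thus defined on the concept lattice preserves arbitrary meets: for every family (c_i)_{i∈ι} of concepts, [R](⨅ i, c_i) = ⨅ i, [R]c_i. -/
/-!
Since `R⁽⁰⁾[Y] = ⋂ x ∈ Y, {a | R a x}` is an intersection of extents, it is an extent, so `[R]` is
well defined. Since each `{x | R a x}` is an intent, `R⁽⁰⁾` does not see the difference between a
set of attributes and its Galois closure. The intent of `⨅ i, cᵢ` is the closure of `⋃ i, intent cᵢ`,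
so `R⁽⁰⁾[intent (⨅ i, cᵢ)] = R⁽⁰⁾[⋃ i, intent cᵢ] = ⋂ i, R⁽⁰⁾[intent cᵢ]`.
-/

open Set Order

universe u

section

variable {A X : Type*} {I R : A → X → Prop}

theorem lowerPolar_eq_biInter_setOf (R : A → X → Prop) (Y : Set X) :
    lowerPolar R Y = ⋂ x ∈ Y, {a | R a x} := by
  ext a
  simp [mem_lowerPolar_iff]

theorem isExtent_lowerPolar_of_isExtent (hR : ∀ x, IsExtent I {a | R a x}) (Y : Set X) :
    IsExtent I (lowerPolar R Y) := by
  rw [lowerPolar_eq_biInter_setOf]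
  exact IsExtent.iInter₂ _ fun x _ ↦ hR x

theorem lowerPolar_upperPolar_lowerPolar_of_isIntent (hR : ∀ a, IsIntent I {x | R a x})
    (Y : Set X) : lowerPolar R (upperPolar I (lowerPolar I Y)) = lowerPolar R Y :=
  Subset.antisymm (lowerPolar_anti R (subset_upperPolar_lowerPolar I Y))
    fun a ha ↦ (hR a).upperPolar_lowerPolar_subset ha

namespace Concept

theorem intent_iInf_eq_upperPolar_lowerPolar_iUnion {ι : Sort*} (f : ι → Concept A X I) :
    (⨅ i, f i).intent = upperPolar I (lowerPolar I (⋃ i, (f i).intent)) := by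
  simp_rw [intent_iInf, lowerPolar_iUnion, lowerPolar_intent]

variable (R) in
def box (hR : ∀ x, IsExtent I {a | R a x}) (c : Concept A X I) : Concept A X I :=
  ofIsExtent I _ (isExtent_lowerPolar_of_isExtent hR c.intent)

theorem box_iInf (hR₁ : ∀ x, IsExtent I {a | R a x}) (hR₂ : ∀ a, IsIntent I {x | R a x})
    {ι : Sort*} (f : ι → Concept A X I) : box R hR₁ (⨅ i, f i) = ⨅ i, box R hR₁ (f i) := by
  ext : 1
  calc lowerPolar R (⨅ i, f i).intent
      = lowerPolar R (⋃ i, (f i).intent) := by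
        rw [intent_iInf_eq_upperPolar_lowerPolar_iUnion,
          lowerPolar_upperPolar_lowerPolar_of_isIntent hR₂]
    _ = (⨅ i, box R hR₁ (f i)).extent := by
        rw [lowerPolar_iUnion, extent_iInf]
        rfl

end Concept

end

/-- For a polarity `(A, X, I)` and an `I`-compatible relation `R ⊆ A × X`, for every
concept `c` the pair `(R⁽⁰⁾[intent c], (R⁽⁰⁾[intent c])^↑)` is a formal concept, and the
operation `[R]` thus defined preserves arbitrary meets. -/
theorem box_wellDefined_and_meet_preserving {A X : Type*} (I : A → X → Prop)
    (R : A → X → Prop)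
    (hR1 : ∀ x : X, lowerPolar I (upperPolar I {a : A | R a x}) = {a : A | R a x})
    (hR2 : ∀ a : A, upperPolar I (lowerPolar I {x : X | R a x}) = {x : X | R a x}) :
    ∃ box : Concept A X I → Concept A X I,
      (∀ c : Concept A X I,
        (box c).extent = lowerPolar R c.intent ∧
        (box c).intent = upperPolar I (lowerPolar R c.intent)) ∧
      ∀ (ι : Type u) (f : ι → Concept A X I), box (⨅ i, f i) = ⨅ i, box (f i) := by
  have hR₁ : ∀ x, IsExtent I {a | R a x} := fun x ↦ isExtent_iff.2 (hR1 x)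
  have hR₂ : ∀ a, IsIntent I {x | R a x} := fun a ↦ isIntent_iff.2 (hR2 a)
  exact ⟨Concept.box R hR₁, fun _ ↦ ⟨rfl, rfl⟩, fun _ f ↦ Concept.box_iInf hR₁ hR₂ f⟩
end

section
/- Let (A, X, I) be a polarity and R ⊆ X × A a compatible relation (for every a ∈ A the set {x ∈ X | x R a} is Galois-stable and for every x ∈ X the set {a ∈ A | x R a} is Galois-stable). Then for every formal concept c of (A, X, I), the pair ((R^{(0)}[extent(c)])^↓, R^{(0)}[extent(c)]) is a formal concept, where R^{(0)}[B] := {x ∈ X | ∀ a ∈ B, x R a} for B ⊆ A, and the operation ⟨R⟩ thus defined on the concept lattice preserves arbitrary joins: for every family (c_i)_{i∈ι} of concepts, ⟨R⟩(⨆ i, c_i) = ⨆ i, ⟨R⟩c_i. -/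
/-! `R⁽⁰⁾[B]` is the intersection of the Galois-stable sets `{x | x R a}`, `a ∈ B`, hence stable.
Since each `{a | x R a}` is stable too, `x ∈ R⁽⁰⁾[B]` (i.e. `B ⊆ {a | x R a}`) also holds for the
closure of `B`, so `R⁽⁰⁾` only sees closures. The extent of a join is the closure of the union of
the extents, and `R⁽⁰⁾` turns that union into the intersection of intents that defines the join of
the images. -/

open Set

universe u

section Polarity

variable {A X : Type*} {I : A → X → Prop} {R : X → A → Prop}

theorem lowerPolar_eq_biInter (B : Set A) : lowerPolar R B = ⋂ a ∈ B, {x | R x a} := by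
  ext x
  simp [mem_lowerPolar_iff]

theorem isIntent_lowerPolar_of_forall_isIntent (hR : ∀ a, Order.IsIntent I {x | R x a})
    (B : Set A) :
    Order.IsIntent I (lowerPolar R B) := by
  rw [lowerPolar_eq_biInter]
  exact Order.IsIntent.iInter₂ _ fun a _ ↦ hR a

theorem lowerPolar_lowerPolar_upperPolar_of_forall_isExtent
    (hR : ∀ x, Order.IsExtent I {a | R x a}) (B : Set A) :
    lowerPolar R (lowerPolar I (upperPolar I B)) = lowerPolar R B := by
  refine (lowerPolar_anti R (subset_lowerPolar_upperPolar I B)).antisymm fun x hx ↦ ?_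
  exact (hR x).lowerPolar_upperPolar_subset fun a ha ↦ hx ha

theorem Concept.extent_iSup_eq_lowerPolar_upperPolar_iUnion {ι : Sort*}
    (f : ι → Concept A X I) :
    (⨆ i, f i).extent = lowerPolar I (upperPolar I (⋃ i, (f i).extent)) := by
  simp_rw [Concept.extent_iSup, upperPolar_iUnion, Concept.upperPolar_extent]

def Concept.diamond (hR : ∀ a, Order.IsIntent I {x | R x a}) (c : Concept A X I) :
    Concept A X I :=
  Concept.ofIsIntent I _ (isIntent_lowerPolar_of_forall_isIntent hR c.extent)

theorem Concept.diamond_iSup (hR : ∀ a, Order.IsIntent I {x | R x a})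
    (hR' : ∀ x, Order.IsExtent I {a | R x a}) {ι : Sort*} (f : ι → Concept A X I) :
    diamond hR (⨆ i, f i) = ⨆ i, diamond hR (f i) := by
  refine Concept.ext' ?_
  simp only [diamond, Concept.intent_ofIsIntent, Concept.intent_iSup,
    extent_iSup_eq_lowerPolar_upperPolar_iUnion,
    lowerPolar_lowerPolar_upperPolar_of_forall_isExtent hR', lowerPolar_iUnion]

end Polarity

/-- For a polarity `(A, X, I)` and a compatible relation `R ⊆ X × A`, for every concept
`c` the pair `((R⁽⁰⁾[extent c])^↓, R⁽⁰⁾[extent c])` is a formal concept, and the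
operation `⟨R⟩` thus defined preserves arbitrary joins. -/
theorem diamond_wellDefined_and_join_preserving {A X : Type*} (I : A → X → Prop)
    (R : X → A → Prop)
    (hR1 : ∀ a : A, upperPolar I (lowerPolar I {x : X | R x a}) = {x : X | R x a})
    (hR2 : ∀ x : X, lowerPolar I (upperPolar I {a : A | R x a}) = {a : A | R x a}) :
    ∃ dia : Concept A X I → Concept A X I,
      (∀ c : Concept A X I,
        (dia c).extent = lowerPolar I (lowerPolar R c.extent) ∧
        (dia c).intent = lowerPolar R c.extent) ∧
      ∀ (ι : Type u) (f : ι → Concept A X I), dia (⨆ i, f i) = ⨆ i, dia (f i) := by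
  have hR : ∀ a, Order.IsIntent I {x | R x a} := fun a ↦ Order.isIntent_iff.2 (hR1 a)
  have hR' : ∀ x, Order.IsExtent I {a | R x a} := fun x ↦ Order.isExtent_iff.2 (hR2 x)
  exact ⟨Concept.diamond hR, fun _ ↦ ⟨rfl, rfl⟩, fun _ ↦ Concept.diamond_iSup hR hR'⟩
end

section
/- (Correspondence for factivity) Let (A, X, I) be a polarity and R ⊆ A × X an I-compatible relation. Then R^{(0)}[intent(c)] ⊆ extent(c) holds for every formal concept c of (A, X, I) if and only if R ⊆ I. -/
/-!
If `R ⊆ I`, then `R⁽⁰⁾[intent c] ⊆ I⁽⁰⁾[intent c] = extent c`. Conversely, given `a R x`, test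
the inclusion on the concept `c` generated by the attribute `x`: its intent, the closure of `{x}`,
lies in the Galois-stable set `{y | a R y}`, so `a ∈ R⁽⁰⁾[intent c] ⊆ extent c = {x}^↓`.
-/

open Set

namespace Concept

variable {A X : Type*} {I R : A → X → Prop}

theorem lowerPolar_intent_subset_extent_of_rel_imp (hRI : ∀ a x, R a x → I a x)
    (c : Concept A X I) : lowerPolar R c.intent ⊆ c.extent := by
  rw [← c.lowerPolar_intent]
  exact fun a ha x hx => hRI a x (ha hx)

theorem intent_ofAttribute_subset {t : Set X} {x : X} (ht : Order.IsIntent I t) (hx : x ∈ t) :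
    (ofAttribute I x).intent ⊆ t :=
  ht.upperPolar_lowerPolar_subset (singleton_subset_iff.2 hx)

theorem rel_of_lowerPolar_intent_ofAttribute_subset {a : A} {x : X}
    (hrow : Order.IsIntent I {y | R a y}) (h : lowerPolar R (ofAttribute I x).intent ⊆
      (ofAttribute I x).extent) (hax : R a x) : I a x := by
  have ha : a ∈ lowerPolar R (ofAttribute I x).intent := fun _ hy =>
    intent_ofAttribute_subset hrow hax hy
  exact (mem_lowerPolar_singleton I).1 (h ha)

end Concept

theorem factivity_correspondence_general {A X : Type*} (I : A → X → Prop) (R : A → X → Prop)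
    (hR2 : ∀ a : A, upperPolar I (lowerPolar I {x : X | R a x}) = {x : X | R a x}) :
    (∀ c : Concept A X I, lowerPolar R c.intent ⊆ c.extent) ↔
      ∀ a : A, ∀ x : X, R a x → I a x :=
  ⟨fun h a x => Concept.rel_of_lowerPolar_intent_ofAttribute_subset
      (Order.isIntent_iff.2 (hR2 a)) (h (Concept.ofAttribute I x)),
    Concept.lowerPolar_intent_subset_extent_of_rel_imp⟩

/-- Correspondence for factivity: for a polarity `(A, X, I)` and an `I`-compatible
relation `R ⊆ A × X`, `R⁽⁰⁾[intent c] ⊆ extent c` holds for every concept `c` iff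
`R ⊆ I`. -/
theorem factivity_correspondence {A X : Type*} (I : A → X → Prop) (R : A → X → Prop)
    (hR1 : ∀ x : X, lowerPolar I (upperPolar I {a : A | R a x}) = {a : A | R a x})
    (hR2 : ∀ a : A, upperPolar I (lowerPolar I {x : X | R a x}) = {x : X | R a x}) :
    (∀ c : Concept A X I, lowerPolar R c.intent ⊆ c.extent) ↔
      ∀ a : A, ∀ x : X, R a x → I a x :=
  factivity_correspondence_general I R hR2
end

section
/- (Correspondence for omniscience) Let (A, X, I) be a polarity and R ⊆ A × X any relation. Then extent(c) ⊆ R^{(0)}[intent(c)] holds for every formal concept c of (A, X, I) if and only if I ⊆ R. -/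
open Set

/-- Correspondence for omniscience: for a polarity `(A, X, I)` and any relation
`R ⊆ A × X`, `extent c ⊆ R⁽⁰⁾[intent c]` holds for every concept `c` iff `I ⊆ R`. -/
theorem omniscience_correspondence {A X : Type*} (I : A → X → Prop) (R : A → X → Prop) :
    (∀ c : Concept A X I, c.extent ⊆ lowerPolar R c.intent) ↔
      ∀ a : A, ∀ x : X, I a x → R a x := by
  refine ⟨fun h a x hax => ?_, fun h c a ha x hx => h a x (c.rel_extent_intent ha hx)⟩
  have ha : a ∈ (Concept.ofObject I a).extent := subset_lowerPolar_upperPolar I {a} rfl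
  have hx : x ∈ (Concept.ofObject I a).intent := (mem_upperPolar_singleton I).2 hax
  exact h _ ha hx
end

section
/- (Correspondence for factivity on graph-based frames) Let (Z, E) be a reflexive graph and R ⊆ Z × Z a relation compatible with the associated polarity (Z, Z, I_{Eᶜ}), i.e., for every y ∈ Z the set {a ∈ Z | ¬(a R y)} is Galois-stable and for every b ∈ Z the set {x ∈ Z | ¬(b R x)} is Galois-stable. Then R^{[0]}[intent(c)] ⊆ extent(c) holds for every formal concept c of (Z, Z, I_{Eᶜ}), where R^{[0]}[Y] := {a ∈ Z | ∀ x ∈ Y, ¬(a R x)}, if and only if E ⊆ R. -/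
open Order

/-! If `E ⊆ R`, then `R^{[0]}[Y] ⊆ Y^↓` for every `Y`, and `Y^↓` is the extent of a concept with
intent `Y`. Conversely, if `z E z'` but not `z R z'`, then compatibility makes
`{x | ¬ z R x}` the intent of a concept; `z` lies in `R^{[0]}` of that intent but not in its
extent, since `z'` is in the intent and `z E z'`. -/

theorem lowerPolar_subset_lowerPolar_of_le {α β : Type*} {r s : α → β → Prop} (h : r ≤ s)
    (t : Set β) : lowerPolar r t ⊆ lowerPolar s t :=
  fun _ ha _ hb => h _ _ (ha hb)

namespace Concept

variable {α β : Type*} {r S : α → β → Prop}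

theorem lowerPolar_intent_subset_extent_of_le (h : S ≤ r) (c : Concept α β r) :
    lowerPolar S c.intent ⊆ c.extent :=
  c.lowerPolar_intent ▸ lowerPolar_subset_lowerPolar_of_le h c.intent

theorem le_of_lowerPolar_intent_subset_extent (hS : ∀ a, IsIntent r {b | S a b})
    (h : ∀ c : Concept α β r, lowerPolar S c.intent ⊆ c.extent) : S ≤ r := by
  intro a b hab
  let c := ofIsIntent r {b | S a b} (hS a)
  have ha : a ∈ c.extent := h c fun _ hb => hb
  exact c.rel_extent_intent ha hab

theorem lowerPolar_intent_subset_extent_iff (hS : ∀ a, IsIntent r {b | S a b}) :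
    (∀ c : Concept α β r, lowerPolar S c.intent ⊆ c.extent) ↔ S ≤ r :=
  ⟨le_of_lowerPolar_intent_subset_extent hS, fun h => lowerPolar_intent_subset_extent_of_le h⟩

end Concept

theorem graph_factivity_correspondence_general {Z : Type*} (E : Z → Z → Prop)
    (R : Z → Z → Prop)
    (hR2 : ∀ b : Z,
      upperPolar (fun a x => ¬ E a x)
          (lowerPolar (fun a x => ¬ E a x) {x : Z | ¬ R b x}) = {x : Z | ¬ R b x}) :
    (∀ c : Concept Z Z (fun a x => ¬ E a x),
        lowerPolar (fun a x => ¬ R a x) c.intent ⊆ c.extent) ↔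
      ∀ z z' : Z, E z z' → R z z' := by
  rw [Concept.lowerPolar_intent_subset_extent_iff fun b => isIntent_iff.mpr (hR2 b)]
  exact forall₂_congr fun _ _ => not_imp_not

/-- Correspondence for factivity on graph-based frames: for a reflexive graph `(Z, E)`
and a compatible relation `R ⊆ Z × Z`, `R^{[0]}[intent c] ⊆ extent c` holds for every
concept `c` of the associated polarity `(Z, Z, I_{Eᶜ})` iff `E ⊆ R`. -/
theorem graph_factivity_correspondence {Z : Type*} (E : Z → Z → Prop)
    (hrefl : Reflexive E) (R : Z → Z → Prop)
    (hR1 : ∀ y : Z,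
      lowerPolar (fun a x => ¬ E a x)
          (upperPolar (fun a x => ¬ E a x) {a : Z | ¬ R a y}) = {a : Z | ¬ R a y})
    (hR2 : ∀ b : Z,
      upperPolar (fun a x => ¬ E a x)
          (lowerPolar (fun a x => ¬ E a x) {x : Z | ¬ R b x}) = {x : Z | ¬ R b x}) :
    (∀ c : Concept Z Z (fun a x => ¬ E a x),
        lowerPolar (fun a x => ¬ R a x) c.intent ⊆ c.extent) ↔
      ∀ z z' : Z, E z z' → R z z' :=
  graph_factivity_correspondence_general E R hR2
end
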